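/- Let G be a simple connected graph on n ≥ 2 vertices. Then for every integer k with 1 ≤ k ≤ n − 1, the sum of the k largest Laplacian eigenvalues of G satisfies μ₁(G) + … + μ_k(G) ≥ 1 + d₁(G) + … + d_k(G), where d₁(G) ≥ … ≥ d_k(G) are the k largest vertex degrees of G. -/

import Mathlib

open Matrix

/-- The signless Laplacian matrix `Q(G) = D + A` of a simple graph, over `ℝ`. -/
def sLapMatrix {m : ℕ} (G : SimpleGraph (Fin m)) [DecidableRel G.Adj] :
    Matrix (Fin m) (Fin m) ℝ :=
  G.degMatrix ℝ + G.adjMatrix ℝ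

/-- `q` lists the eigenvalues of `A` (with multiplicity) in non-increasing order. -/
def IsEigSeq {m : ℕ} (A : Matrix (Fin m) (Fin m) ℝ) (q : Fin m → ℝ) : Prop :=
  Antitone q ∧ ∃ (hA : A.IsHermitian) (σ : Equiv.Perm (Fin m)),
    ∀ i, q i = hA.eigenvalues (σ i)

/-- `d` lists the degrees of `G` (with multiplicity) in non-increasing order. -/
def IsDegSeq {m : ℕ} (G : SimpleGraph (Fin m)) [DecidableRel G.Adj] (d : Fin m → ℕ) : Prop :=
  Antitone d ∧ ∃ σ : Equiv.Perm (Fin m), ∀ i, d i = G.degree (σ i)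

/-!
Ky Fan: `μ₁ + ⋯ + μ_k ≥ tr (L X)` for every symmetric `X` with `0 ≤ X ≤ 1` and `tr X = k`.
Let `S` be the `k` vertices of degrees `d₁, …, d_k`, `ξ` its indicator vector, `e` the number of
edges leaving `S`, and `T` the `m ≥ 1` vertices outside `S` with a neighbour in `S` (connectivity).
For `y = k 1_T - m 1_S` take `X` the orthogonal projection onto `(ℝ^S ⊖ ℝξ) ⊕ ℝy`. Then
`tr (L X) = ∑_{v ∈ S} d_v - e / k + yᵀLy / yᵀy`, where `yᵀLy ≥ e (k + m)²` and `yᵀy = k m (k + m)`,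
so `tr (L X) ≥ ∑_{v ∈ S} d_v + e / m ≥ ∑_{v ∈ S} d_v + 1` because `e ≥ m`.
-/

open Finset
open scoped MatrixOrder

lemma sum_mul_le_sum_of_weights {ι : Type*} [Fintype ι] [DecidableEq ι] (F : Finset ι)
    (μ w : ι → ℝ) (p : ℝ) (hw0 : ∀ i, 0 ≤ w i) (hw1 : ∀ i, w i ≤ 1) (hw : ∑ i, w i = #F)
    (hF : ∀ i ∈ F, p ≤ μ i) (hFc : ∀ i ∉ F, μ i ≤ p) :
    ∑ i, μ i * w i ≤ ∑ i ∈ F, μ i := by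
  have hdiff : ∑ i ∈ F, μ i - ∑ i, μ i * w i
      = ∑ i, (μ i - p) * ((if i ∈ F then 1 else 0) - w i) := by
    simp only [mul_sub, sub_mul, mul_ite, mul_one, mul_zero, sum_sub_distrib, sum_ite_mem,
      univ_inter, ← mul_sum, hw, sum_const, nsmul_eq_mul]
    ring
  have hterm : 0 ≤ ∑ i, (μ i - p) * ((if i ∈ F then 1 else 0) - w i) := by
    refine sum_nonneg fun i _ => ?_
    by_cases hi : i ∈ F
    · rw [if_pos hi]
      exact mul_nonneg (by linarith [hF i hi]) (by linarith [hw1 i])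
    · rw [if_neg hi]
      exact mul_nonneg_of_nonpos_of_nonpos (by linarith [hFc i hi]) (by linarith [hw0 i])
  linarith

lemma trace_conj_diagonal_mul {ι : Type*} [Fintype ι] [DecidableEq ι]
    (U X : Matrix ι ι ℝ) (f : ι → ℝ) :
    (U * diagonal f * star U * X).trace = ∑ j, f j * (star U * X * U) j j := by
  rw [Matrix.mul_assoc, Matrix.mul_assoc, trace_mul_comm, Matrix.mul_assoc, trace_mul_comm]
  simp [Matrix.trace, Matrix.mul_diagonal, mul_comm]

theorem trace_mul_le_sum_of_isEigSeq {n : ℕ} {A X : Matrix (Fin n) (Fin n) ℝ} {μ : Fin n → ℝ}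
    (hμ : IsEigSeq A μ) (hX0 : 0 ≤ X) (hX1 : X ≤ 1) {k : ℕ} (hk : k < n) (hX : X.trace = k) :
    (A * X).trace ≤ ∑ i ∈ univ.filter (fun i : Fin n => i.val < k), μ i := by
  obtain ⟨hanti, hA, σ, hσ⟩ := hμ
  set U : Matrix (Fin n) (Fin n) ℝ := ↑hA.eigenvectorUnitary
  have hUU : star U * U = 1 := Unitary.coe_star_mul_self _
  have hUU' : U * star U = 1 := Unitary.coe_mul_star_self _
  set M := star U * X * U
  have hM0 : M.PosSemidef := hX0.posSemidef.conjTranspose_mul_mul_same U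
  have hM1 : (1 - M).PosSemidef := by
    have := (le_iff.mp hX1).conjTranspose_mul_mul_same U
    rwa [Matrix.mul_sub, Matrix.sub_mul, Matrix.mul_one, ← star_eq_conjTranspose, hUU] at this
  have hA' : A = U * diagonal hA.eigenvalues * star U := by simpa using hA.spectral_theorem
  have htrM : ∑ i, M (σ i) (σ i) = k := by
    rw [Equiv.sum_comp σ (fun j => M j j), ← hX]
    change (star U * X * U).trace = X.trace
    rw [Matrix.mul_assoc, trace_mul_comm, Matrix.mul_assoc, hUU', Matrix.mul_one]
  rw [hA', trace_conj_diagonal_mul, ← Equiv.sum_comp σ]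
  simp only [← hσ]
  refine sum_mul_le_sum_of_weights _ μ (fun i => M (σ i) (σ i)) (μ ⟨k, hk⟩)
    (fun i => hM0.diag_nonneg) (fun i => ?_) ?_ ?_ ?_
  · simpa using hM1.diag_nonneg (i := σ i)
  · rw [htrM, Fin.card_filter_val_lt, min_eq_right hk.le]
  all_goals exact fun i hi => hanti (Fin.le_def.mpr (by simp at hi ⊢; omega))

section TestProjection
variable {ι : Type*} [DecidableEq ι]

def Finset.indicatorVec (S : Finset ι) : ι → ℝ := fun v => if v ∈ S then 1 else 0

variable [Fintype ι]

lemma dotProduct_indicatorVec (S : Finset ι) (y : ι → ℝ) :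
    S.indicatorVec ⬝ᵥ y = ∑ v ∈ S, y v := by
  simp [Finset.indicatorVec, dotProduct, sum_ite_mem]

lemma indicatorVec_dotProduct_self (S : Finset ι) :
    S.indicatorVec ⬝ᵥ S.indicatorVec = #S := by
  simp [dotProduct_indicatorVec, Finset.indicatorVec]

lemma indicatorVec_dotProduct_eq_zero {S T : Finset ι} (h : Disjoint S T) :
    S.indicatorVec ⬝ᵥ T.indicatorVec = 0 := by
  rw [dotProduct_indicatorVec]
  exact sum_eq_zero fun v hv => by simp [Finset.indicatorVec, Finset.disjoint_left.mp h hv]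

/-- For `y` constant on `S`, the orthogonal projection onto `(ℝ^S ⊖ ℝ 1_S) ⊕ ℝ y`. -/
noncomputable def testProj (S : Finset ι) (y : ι → ℝ) : Matrix ι ι ℝ :=
  diagonal S.indicatorVec - (#S : ℝ)⁻¹ • vecMulVec S.indicatorVec S.indicatorVec
    + (y ⬝ᵥ y)⁻¹ • vecMulVec y y

lemma isStarProjection_testProj {S : Finset ι} (hS : S.Nonempty) {y : ι → ℝ} (hy : y ≠ 0)
    {β : ℝ} (hyS : ∀ v ∈ S, y v = β) : IsStarProjection (testProj S y) := by
  have hξy : S.indicatorVec ⬝ᵥ y = β * #S := by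
    rw [dotProduct_indicatorVec, sum_congr rfl hyS]; simp [mul_comm]
  have hyξ : y ⬝ᵥ S.indicatorVec = β * #S := by rw [dotProduct_comm, hξy]
  have hDξ : diagonal S.indicatorVec *ᵥ S.indicatorVec = S.indicatorVec := by
    ext v; by_cases hv : v ∈ S <;> simp [mulVec_diagonal, Finset.indicatorVec, hv]
  have hDy : diagonal S.indicatorVec *ᵥ y = β • S.indicatorVec := by
    ext v; by_cases hv : v ∈ S <;> simp [mulVec_diagonal, Finset.indicatorVec, hv, hyS]
  have hξD : S.indicatorVec ᵥ* diagonal S.indicatorVec = S.indicatorVec := by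
    ext v; by_cases hv : v ∈ S <;> simp [vecMul_diagonal, Finset.indicatorVec, hv]
  have hyD : y ᵥ* diagonal S.indicatorVec = β • S.indicatorVec := by
    ext v; by_cases hv : v ∈ S <;> simp [vecMul_diagonal, Finset.indicatorVec, hv, hyS]
  have hDD : diagonal S.indicatorVec * diagonal S.indicatorVec = diagonal S.indicatorVec := by
    rw [diagonal_mul_diagonal]
    congr 1; ext v; by_cases hv : v ∈ S <;> simp [Finset.indicatorVec, hv]
  have hk : (#S : ℝ) ≠ 0 := by exact_mod_cast hS.card_pos.ne'
  have hN : y ⬝ᵥ y ≠ 0 := dotProduct_self_eq_zero.not.mpr hy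
  refine ⟨?_, ?_⟩
  · unfold IsIdempotentElem testProj
    simp only [Matrix.add_mul, Matrix.mul_add, Matrix.sub_mul, Matrix.mul_sub, Matrix.smul_mul,
      Matrix.mul_smul, vecMulVec_mul_vecMulVec]
    simp only [hDD, mul_vecMulVec, vecMulVec_mul, hDξ, hDy, hξD, hyD, indicatorVec_dotProduct_self,
      hξy, hyξ, smul_smul, smul_vecMulVec, vecMulVec_smul]
    match_scalars <;> field_simp <;> ring
  · ext i j
    by_cases h : i = j
    · subst h; rfl
    · simp [testProj, vecMulVec_apply, h, Ne.symm h, mul_comm]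

lemma trace_testProj {S : Finset ι} (hS : S.Nonempty) {y : ι → ℝ} (hy : y ≠ 0) :
    (testProj S y).trace = #S := by
  have hk : (#S : ℝ) ≠ 0 := by exact_mod_cast hS.card_pos.ne'
  have hN : y ⬝ᵥ y ≠ 0 := dotProduct_self_eq_zero.not.mpr hy
  simp [testProj, dotProduct_indicatorVec, Finset.indicatorVec, hk, hN]

lemma trace_mul_testProj (A : Matrix ι ι ℝ) (S : Finset ι) (y : ι → ℝ) :
    (A * testProj S y).trace = ∑ v ∈ S, A v v
      - (S.indicatorVec ⬝ᵥ (A *ᵥ S.indicatorVec)) / #S + (y ⬝ᵥ (A *ᵥ y)) / (y ⬝ᵥ y) := by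
  have hdiag : (A * diagonal S.indicatorVec).trace = ∑ v ∈ S, A v v := by
    simp [trace, mul_diagonal, Finset.indicatorVec, sum_ite_mem]
  rw [testProj, Matrix.mul_add, Matrix.mul_sub, trace_add, trace_sub, hdiag, Matrix.mul_smul,
    Matrix.mul_smul, trace_smul, trace_smul, mul_vecMulVec, mul_vecMulVec, trace_vecMulVec,
    trace_vecMulVec, dotProduct_comm (A *ᵥ _), dotProduct_comm (A *ᵥ _), smul_eq_mul,
    smul_eq_mul, inv_mul_eq_div, inv_mul_eq_div]

end TestProjection

namespace SimpleGraph
variable {V : Type*} (G : SimpleGraph V) [DecidableRel G.Adj]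

def degreeIn (S : Finset V) (t : V) : ℕ := #{v ∈ S | G.Adj t v}

lemma sum_adj_sq_eq_degreeIn_mul {S : Finset V} {x : V → ℝ} {a : ℝ} (hx : ∀ v ∈ S, x v = a)
    (t : V) :
    ∑ v ∈ S, (if G.Adj t v then (x t - x v) ^ 2 else 0) = G.degreeIn S t * (x t - a) ^ 2 := by
  rw [degreeIn, ← sum_filter, sum_congr rfl fun v hv => by
    rw [hx v (mem_filter.mp hv).1], sum_const, nsmul_eq_mul]

variable [Fintype V] [DecidableEq V]

lemma exists_degreeIn_pos_of_connected (hG : G.Connected) {S : Finset V} (hS : S.Nonempty)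
    (hSc : Sᶜ.Nonempty) : ∃ t ∈ Sᶜ, 0 < G.degreeIn S t := by
  obtain ⟨a, ha⟩ := hS
  obtain ⟨b, hb⟩ := hSc
  obtain ⟨p⟩ := hG.preconnected a b
  obtain ⟨d, -, hd, hd'⟩ := p.exists_boundary_dart S ha (mem_compl.mp hb)
  exact ⟨d.snd, mem_compl.mpr hd', card_pos.mpr ⟨d.fst, mem_filter.mpr ⟨hd, d.adj.symm⟩⟩⟩

lemma dotProduct_lapMatrix_mulVec_eq_cut (S : Finset V) (x : V → ℝ) :
    x ⬝ᵥ (G.lapMatrix ℝ *ᵥ x) =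
      ∑ t ∈ Sᶜ, ∑ v ∈ S, (if G.Adj t v then (x t - x v) ^ 2 else 0)
      + ((∑ i ∈ S, ∑ j ∈ S, if G.Adj i j then (x i - x j) ^ 2 else 0)
        + ∑ i ∈ Sᶜ, ∑ j ∈ Sᶜ, if G.Adj i j then (x i - x j) ^ 2 else 0) / 2 := by
  set f : V → V → ℝ := fun i j => if G.Adj i j then (x i - x j) ^ 2 else 0
  have hsymm : ∑ i ∈ S, ∑ j ∈ Sᶜ, f i j = ∑ t ∈ Sᶜ, ∑ v ∈ S, f t v := by
    rw [sum_comm]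
    refine sum_congr rfl fun t _ => sum_congr rfl fun v _ => ?_
    simp only [f, G.adj_comm v t, sq, ← neg_sub (x t) (x v), neg_mul_neg]
  have hsplit : ∑ i, ∑ j, f i j = ∑ i ∈ S, ∑ j ∈ S, f i j + ∑ i ∈ S, ∑ j ∈ Sᶜ, f i j
      + (∑ i ∈ Sᶜ, ∑ j ∈ S, f i j + ∑ i ∈ Sᶜ, ∑ j ∈ Sᶜ, f i j) := by
    simp only [← sum_add_distrib, sum_add_sum_compl]
  rw [← toLinearMap₂'_apply', lapMatrix_toLinearMap₂']
  change (∑ i, ∑ j, f i j) / 2 = _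
  rw [hsplit, hsymm]
  ring

lemma sum_degreeIn_mul_le_dotProduct_lapMatrix_mulVec {S : Finset V} {x : V → ℝ} {a : ℝ}
    (hx : ∀ v ∈ S, x v = a) :
    ∑ t ∈ Sᶜ, G.degreeIn S t * (x t - a) ^ 2 ≤ x ⬝ᵥ (G.lapMatrix ℝ *ᵥ x) := by
  rw [G.dotProduct_lapMatrix_mulVec_eq_cut S, sum_congr rfl fun t _ =>
    G.sum_adj_sq_eq_degreeIn_mul hx t]
  have : 0 ≤ (∑ i ∈ S, ∑ j ∈ S, if G.Adj i j then (x i - x j) ^ 2 else 0)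
      + ∑ i ∈ Sᶜ, ∑ j ∈ Sᶜ, if G.Adj i j then (x i - x j) ^ 2 else 0 := by positivity
  linarith

lemma dotProduct_lapMatrix_mulVec_indicatorVec (S : Finset V) :
    S.indicatorVec ⬝ᵥ (G.lapMatrix ℝ *ᵥ S.indicatorVec) = ∑ t ∈ Sᶜ, (G.degreeIn S t : ℝ) := by
  have hS : ∀ v ∈ S, S.indicatorVec v = 1 := fun v hv => by simp [Finset.indicatorVec, hv]
  have hSc : ∀ v ∈ Sᶜ, S.indicatorVec v = 0 := fun v hv => by
    simp [Finset.indicatorVec, mem_compl.mp hv]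
  have hin : ∀ T : Finset V, (∀ i ∈ T, ∀ j ∈ T, S.indicatorVec i = S.indicatorVec j) →
      ∑ i ∈ T, ∑ j ∈ T,
        (if G.Adj i j then (S.indicatorVec i - S.indicatorVec j) ^ 2 else 0) = 0 :=
    fun T hT => sum_eq_zero fun i hi => sum_eq_zero fun j hj => by simp [hT i hi j hj]
  rw [G.dotProduct_lapMatrix_mulVec_eq_cut S, sum_congr rfl fun t _ =>
    G.sum_adj_sq_eq_degreeIn_mul hS t, hin S fun i hi j hj => by rw [hS i hi, hS j hj],
    hin Sᶜ fun i hi j hj => by rw [hSc i hi, hSc j hj]]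
  simp +contextual [hSc]

lemma exists_rayleigh_quotient_ge (hG : G.Connected) {S : Finset V} (hS : S.Nonempty)
    (hSc : Sᶜ.Nonempty) : ∃ (y : V → ℝ) (β : ℝ), y ≠ 0 ∧ (∀ v ∈ S, y v = β) ∧
      1 + S.indicatorVec ⬝ᵥ (G.lapMatrix ℝ *ᵥ S.indicatorVec) / #S
        ≤ y ⬝ᵥ (G.lapMatrix ℝ *ᵥ y) / (y ⬝ᵥ y) := by
  set T := {t ∈ Sᶜ | 0 < G.degreeIn S t}
  have hT : T.Nonempty := by
    obtain ⟨t, ht, hpos⟩ := G.exists_degreeIn_pos_of_connected hG hS hSc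
    exact ⟨t, mem_filter.mpr ⟨ht, hpos⟩⟩
  have hTS : Disjoint T S := Finset.disjoint_left.mpr fun t ht => mem_compl.mp (mem_filter.mp ht).1
  set e := ∑ t ∈ Sᶜ, (G.degreeIn S t : ℝ)
  have hme : (#T : ℝ) ≤ e := by
    have het : e = ∑ t ∈ T, (G.degreeIn S t : ℝ) :=
      (sum_filter_of_ne fun t _ ht => Nat.pos_of_ne_zero (by exact_mod_cast ht)).symm
    rw [het, card_eq_sum_ones, Nat.cast_sum]
    exact sum_le_sum fun t ht => by exact_mod_cast (mem_filter.mp ht).2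
  set k : ℝ := ↑(#S)
  set m : ℝ := ↑(#T)
  have hk : 0 < k := by simpa [k] using hS.card_pos
  have hm : 0 < m := by simpa [m] using hT.card_pos
  set y : V → ℝ := k • T.indicatorVec - m • S.indicatorVec
  have hyS : ∀ v ∈ S, y v = -m := fun v hv => by
    simp [y, Finset.indicatorVec, hv, Finset.disjoint_right.mp hTS hv]
  have hyy : y ⬝ᵥ y = k * m * (k + m) := by
    simp only [y, sub_dotProduct, dotProduct_sub, smul_dotProduct, dotProduct_smul,
      indicatorVec_dotProduct_self, indicatorVec_dotProduct_eq_zero hTS,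
      indicatorVec_dotProduct_eq_zero hTS.symm, smul_eq_mul]
    ring
  have hyLy : e * (k + m) ^ 2 ≤ y ⬝ᵥ (G.lapMatrix ℝ *ᵥ y) := by
    refine le_of_eq_of_le ?_ (G.sum_degreeIn_mul_le_dotProduct_lapMatrix_mulVec hyS)
    rw [sum_mul]
    refine sum_congr rfl fun t ht => ?_
    by_cases htT : t ∈ T
    · simp [y, Finset.indicatorVec, htT, mem_compl.mp ht]
    · have : G.degreeIn S t = 0 := by simpa [T, ht] using htT
      simp [this]
  refine ⟨y, -m, fun hy => ?_, hyS, ?_⟩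
  · rw [hy, zero_dotProduct] at hyy
    have : 0 < k * m * (k + m) := by positivity
    linarith
  · rw [G.dotProduct_lapMatrix_mulVec_indicatorVec, hyy, le_div_iff₀ (by positivity)]
    calc (1 + e / k) * (k * m * (k + m)) = (k + e) * m * (k + m) := by field_simp
      _ ≤ e * (k + m) ^ 2 := by
        nlinarith [mul_le_mul_of_nonneg_left hme (by positivity : 0 ≤ k * (k + m))]
      _ ≤ _ := hyLy

lemma exists_isStarProjection_trace_lapMatrix_mul_ge (hG : G.Connected) {S : Finset V}
    (hS : S.Nonempty) (hSc : Sᶜ.Nonempty) :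
    ∃ X : Matrix V V ℝ, IsStarProjection X ∧ X.trace = #S ∧
      1 + ∑ v ∈ S, (G.degree v : ℝ) ≤ (G.lapMatrix ℝ * X).trace := by
  obtain ⟨y, β, hy, hyS, hR⟩ := G.exists_rayleigh_quotient_ge hG hS hSc
  refine ⟨testProj S y, isStarProjection_testProj hS hy hyS, trace_testProj hS hy, ?_⟩
  have hdiag : ∀ v, G.lapMatrix ℝ v v = G.degree v := fun v => by simp [lapMatrix, degMatrix]
  rw [trace_mul_testProj]
  simp only [hdiag]
  linarith

end SimpleGraph

theorem grone_inequality {n : ℕ}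
    (G : SimpleGraph (Fin n)) [DecidableRel G.Adj] (hG : G.Connected)
    (mu : Fin n → ℝ) (hmu : IsEigSeq (G.lapMatrix ℝ) mu)
    (d : Fin n → ℕ) (hd : IsDegSeq G d)
    (k : ℕ) (hk1 : 1 ≤ k) (hkn : k ≤ n - 1) :
    ∑ i ∈ Finset.univ.filter (fun i : Fin n => i.val < k), mu i ≥
      1 + ∑ i ∈ Finset.univ.filter (fun i : Fin n => i.val < k), (d i : ℝ) := by
  obtain ⟨-, σ, hσ⟩ := hd
  have hkn' : k < n := by omega
  set F := univ.filter (fun i : Fin n => i.val < k)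
  set S := F.map σ.toEmbedding
  have hS : #S = k := by rw [card_map, Fin.card_filter_val_lt, min_eq_right hkn'.le]
  have hSne : S.Nonempty := card_pos.mp (by omega)
  have hScne : Sᶜ.Nonempty := card_pos.mp (by rw [card_compl, Fintype.card_fin]; omega)
  obtain ⟨X, hX, hXtr, hXL⟩ := G.exists_isStarProjection_trace_lapMatrix_mul_ge hG hSne hScne
  have hdeg : ∑ i ∈ F, (d i : ℝ) = ∑ v ∈ S, (G.degree v : ℝ) := by simp [S, hσ]
  rw [hdeg, ge_iff_le]
  exact hXL.trans <| trace_mul_le_sum_of_isEigSeq hmu hX.nonneg hX.le_one hkn' <| by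
    rw [hXtr, hS]
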